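/- For every real δ > 1, every real ε > 0, and every positive integer k with πεk ≤ 2/5, the Laplace slender-body PDE eigenvalue λ = 2π²εk·K₁(πεk)/K₀(πεk) and the δ-regularized eigenvalue λ^δ = 2π/(log δ + K₀(δπεk)) satisfy the refined bound |λ − λ^δ| ≤ 82·π³·δ²·(1 + log δ)·ε²·k². -/

import Mathlib

open Real

/-- Modified Bessel function of the second kind of order `j`:
`K_j(z) = ∫₀^∞ exp (−z cosh t) * cosh (j t) dt`. -/
noncomputable def besselK (j : ℕ) (z : ℝ) : ℝ :=
  ∫ t in Set.Ioi (0 : ℝ), Real.exp (-z * Real.cosh t) * Real.cosh ((j : ℝ) * t)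

/-!
With `z = πεk` the difference is `2π (z K₁(z) / K₀(z) - 1 / (log δ + K₀(δz)))`.
Writing `cosh t = sinh t + e⁻ᵗ` gives `K₁(z) = e⁻ᶻ / z + 1 - J(z)` with
`J(z) = ∫₀^∞ (1 - e^{-z cosh t}) e⁻ᵗ dt`, and `0 ≤ J(s) ≤ s (log z⁻¹ + 1)` for `s ≥ z`,
so `|K₁(s) - 1/s| = O(s log z⁻¹)` there. Integrating `K₀' = -K₁` over `[z, δz]` then gives
`log δ + K₀(δz) - K₀(z) = O(δ² z² log z⁻¹)`, and the logarithms are absorbed by the lower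
bound `e⁻¹ log z⁻¹` for both `K₀(z)` and `log δ + K₀(δz)`.
-/

open MeasureTheory Set Filter Topology
open scoped Nat

lemma exp_neg_mul_cosh_mul_cosh_le (j : ℕ) {z t : ℝ} (hz : 0 < z) (ht : 0 ≤ t) :
    exp (-z * cosh t) * cosh (j * t) ≤ (j + 1)! * (2 / z) ^ (j + 1) * exp (-t) := by
  set x := z * exp t / 2
  have hx : 0 < x := by positivity
  have hcosh : x ≤ z * cosh t := by
    have : exp t / 2 ≤ cosh t := by rw [cosh_eq]; linarith [exp_pos (-t)]
    simp only [x, mul_div_assoc]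
    exact mul_le_mul_of_nonneg_left this hz.le
  have hcosh_j : cosh (j * t) ≤ exp t ^ j := by
    rw [← exp_nat_mul, ← exp_sub_sinh]
    linarith [sinh_nonneg_iff.2 (mul_nonneg j.cast_nonneg ht)]
  -- `x ^ (j + 1) / (j + 1)! ≤ exp x` turns the double-exponential decay into `exp (-t)`
  have hdecay : exp (-x) * x ^ (j + 1) ≤ (j + 1)! := by
    have := pow_div_factorial_le_exp x hx.le (j + 1)
    rw [div_le_iff₀ (by positivity)] at this
    rw [exp_neg, inv_mul_le_iff₀ (exp_pos x)]
    linarith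
  have hxt : x ^ (j + 1) = (z / 2) ^ (j + 1) * exp t ^ j * exp t := by
    simp only [x]; ring
  calc exp (-z * cosh t) * cosh (j * t) ≤ exp (-x) * exp t ^ j := by
        gcongr
        linarith
    _ = exp (-x) * x ^ (j + 1) * (2 / z) ^ (j + 1) * exp (-t) := by
        rw [hxt, exp_neg t, div_pow, div_pow]; field_simp
    _ ≤ (j + 1)! * (2 / z) ^ (j + 1) * exp (-t) := by gcongr

lemma integrableOn_besselK_integrand (j : ℕ) {z : ℝ} (hz : 0 < z) :
    IntegrableOn (fun t => exp (-z * cosh t) * cosh (j * t)) (Ioi 0) := by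
  refine ((integrableOn_exp_neg_Ioi 0).const_mul ((j + 1)! * (2 / z) ^ (j + 1))).mono'
    (by fun_prop) ?_
  filter_upwards [self_mem_ae_restrict measurableSet_Ioi] with t ht
  rw [norm_of_nonneg (by positivity)]
  exact exp_neg_mul_cosh_mul_cosh_le j hz (le_of_lt ht)

lemma besselK_zero_eq (z : ℝ) : besselK 0 z = ∫ t in Ioi 0, exp (-z * cosh t) := by
  simp [besselK]

lemma besselK_one_eq (z : ℝ) : besselK 1 z = ∫ t in Ioi 0, exp (-z * cosh t) * cosh t := by
  simp [besselK]

lemma integrableOn_besselK_zero_integrand {z : ℝ} (hz : 0 < z) :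
    IntegrableOn (fun t => exp (-z * cosh t)) (Ioi 0) := by
  simpa using integrableOn_besselK_integrand 0 hz

lemma integrableOn_besselK_one_integrand {z : ℝ} (hz : 0 < z) :
    IntegrableOn (fun t => exp (-z * cosh t) * cosh t) (Ioi 0) := by
  simpa using integrableOn_besselK_integrand 1 hz

lemma besselK_nonneg (j : ℕ) (z : ℝ) : 0 ≤ besselK j z :=
  setIntegral_nonneg measurableSet_Ioi fun t _ => by positivity

lemma hasDerivAt_besselK_zero {z : ℝ} (hz : 0 < z) :
    HasDerivAt (besselK 0) (-besselK 1 z) z := by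
  have h := hasDerivAt_integral_of_dominated_loc_of_deriv_le
    (μ := volume.restrict (Ioi 0)) (F := fun x t => exp (-x * cosh t))
    (F' := fun x t => -(exp (-x * cosh t) * cosh t))
    (bound := fun t => exp (-(z / 2) * cosh t) * cosh t)
    (Metric.ball_mem_nhds z (half_pos hz))
    (Eventually.of_forall fun _ => by fun_prop) (integrableOn_besselK_zero_integrand hz)
    (by fun_prop) ?_ (integrableOn_besselK_one_integrand (half_pos hz)) ?_
  · simp only [integral_neg, ← besselK_one_eq] at h
    exact (funext besselK_zero_eq) ▸ h.2
  · refine Eventually.of_forall fun t x hx => ?_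
    rw [Metric.mem_ball, dist_eq, abs_lt] at hx
    rw [norm_neg, norm_of_nonneg (by positivity)]
    gcongr
    nlinarith [cosh_pos t]
  · refine Eventually.of_forall fun t x _ => ?_
    simpa using ((hasDerivAt_id x).neg.mul_const (cosh t)).exp

lemma besselK_one_antitoneOn : AntitoneOn (besselK 1) (Ioi 0) := by
  intro a ha b hb hab
  simp only [besselK_one_eq]
  refine setIntegral_mono_on (integrableOn_besselK_one_integrand hb)
    (integrableOn_besselK_one_integrand ha) measurableSet_Ioi fun t _ => ?_
  gcongr

lemma besselK_zero_sub_besselK_zero {z w : ℝ} (hz : 0 < z) (hzw : z ≤ w) :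
    besselK 0 z - besselK 0 w = ∫ s in z..w, besselK 1 s := by
  have hsub : uIcc z w ⊆ Ioi 0 := by
    rw [uIcc_of_le hzw]; exact fun s hs => hz.trans_le hs.1
  have hftc := intervalIntegral.integral_eq_sub_of_hasDerivAt
    (fun s hs => hasDerivAt_besselK_zero (hsub hs))
    (besselK_one_antitoneOn.mono hsub).intervalIntegrable.neg
  rw [intervalIntegral.integral_neg] at hftc
  linarith

noncomputable def besselKOneDefect (z : ℝ) : ℝ :=
  ∫ t in Ioi 0, (1 - exp (-z * cosh t)) * exp (-t)

lemma integrableOn_besselKOneDefect_integrand {z : ℝ} (hz : 0 ≤ z) :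
    IntegrableOn (fun t => (1 - exp (-z * cosh t)) * exp (-t)) (Ioi 0) := by
  refine (integrableOn_exp_neg_Ioi 0).mono' (by fun_prop) (Eventually.of_forall fun t => ?_)
  have h : exp (-z * cosh t) ≤ 1 := exp_le_one_iff.2 (by nlinarith [cosh_pos t])
  rw [norm_of_nonneg (by nlinarith [exp_pos (-t)])]
  nlinarith [exp_pos (-t), exp_pos (-z * cosh t)]

lemma besselKOneDefect_nonneg {z : ℝ} (hz : 0 ≤ z) : 0 ≤ besselKOneDefect z :=
  setIntegral_nonneg measurableSet_Ioi fun t _ => by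
    have h : exp (-z * cosh t) ≤ 1 := exp_le_one_iff.2 (by nlinarith [cosh_pos t])
    nlinarith [exp_pos (-t)]

/-- Split at `T`: below it `1 - exp (-z cosh t) ≤ z cosh t ≤ z exp t`, above it the integrand is
at most `exp (-t)`. -/
lemma besselKOneDefect_le {z T : ℝ} (hz : 0 ≤ z) (hT : 0 ≤ T) (hTz : exp (-T) ≤ z) :
    besselKOneDefect z ≤ z * (T + 1) := by
  have hint := integrableOn_besselKOneDefect_integrand hz
  have hlow : ∫ t in Ioc 0 T, (1 - exp (-z * cosh t)) * exp (-t) ≤ ∫ _ in Ioc 0 T, z := by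
    refine setIntegral_mono_on (hint.mono_set Ioc_subset_Ioi_self)
      (integrableOn_const measure_Ioc_lt_top.ne) measurableSet_Ioc fun t ht => ?_
    have h1 : 1 - exp (-z * cosh t) ≤ z * cosh t := by linarith [add_one_le_exp (-z * cosh t)]
    have h2 : cosh t * exp (-t) ≤ 1 := by
      have e1 : exp t * exp (-t) = 1 := by rw [← exp_add, add_neg_cancel, exp_zero]
      have e2 : exp (-t) ≤ 1 := exp_le_one_iff.2 (by linarith [ht.1])
      rw [cosh_eq]
      nlinarith [exp_pos (-t)]
    nlinarith [exp_pos (-t)]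
  have hhigh : ∫ t in Ioi T, (1 - exp (-z * cosh t)) * exp (-t) ≤ ∫ t in Ioi T, exp (-t) :=
    setIntegral_mono_on (hint.mono_set (Ioi_subset_Ioi hT)) (integrableOn_exp_neg_Ioi T)
      measurableSet_Ioi fun t _ => by nlinarith [exp_pos (-t), exp_pos (-z * cosh t)]
  rw [besselKOneDefect, ← Ioc_union_Ioi_eq_Ioi hT, setIntegral_union (Ioc_disjoint_Ioi le_rfl)
    measurableSet_Ioi (hint.mono_set Ioc_subset_Ioi_self) (hint.mono_set (Ioi_subset_Ioi hT))]
  rw [setIntegral_const, smul_eq_mul, volume_real_Ioc_of_le hT, sub_zero] at hlow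
  rw [integral_exp_neg_Ioi] at hhigh
  nlinarith

lemma tendsto_exp_neg_mul_cosh_atTop {z : ℝ} (hz : 0 < z) :
    Tendsto (fun t => exp (-z * cosh t)) atTop (𝓝 0) := by
  have hcosh : Tendsto cosh atTop atTop :=
    tendsto_atTop_mono (fun t => by rw [cosh_eq]; linarith [exp_pos (-t)])
      (tendsto_exp_atTop.atTop_div_const two_pos)
  exact tendsto_exp_atBot.comp (hcosh.const_mul_atTop_of_neg (neg_lt_zero.2 hz))

lemma hasDerivAt_exp_neg_mul_cosh_div {z : ℝ} (hz : 0 < z) (t : ℝ) :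
    HasDerivAt (fun t => exp (-z * cosh t) / -z) (exp (-z * cosh t) * sinh t) t := by
  refine (((hasDerivAt_cosh t).const_mul (-z)).exp.div_const (-z)).congr_deriv ?_
  field_simp

lemma integrableOn_and_integral_exp_neg_mul_cosh_mul_sinh {z : ℝ} (hz : 0 < z) :
    IntegrableOn (fun t => exp (-z * cosh t) * sinh t) (Ioi 0) ∧
      ∫ t in Ioi 0, exp (-z * cosh t) * sinh t = exp (-z) / z := by
  have hderiv := fun t (_ : t ∈ Ioi (0 : ℝ)) => hasDerivAt_exp_neg_mul_cosh_div hz t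
  have hnonneg : ∀ t ∈ Ioi (0 : ℝ), 0 ≤ exp (-z * cosh t) * sinh t :=
    fun t ht => mul_nonneg (exp_pos _).le (sinh_nonneg_iff.2 (le_of_lt ht))
  have hlim : Tendsto (fun t => exp (-z * cosh t) / -z) atTop (𝓝 0) := by
    simpa using (tendsto_exp_neg_mul_cosh_atTop hz).div_const (-z)
  have hcont := (hasDerivAt_exp_neg_mul_cosh_div hz 0).continuousAt.continuousWithinAt (s := Ici 0)
  refine ⟨integrableOn_Ioi_deriv_of_nonneg hcont hderiv hnonneg hlim, ?_⟩
  rw [integral_Ioi_of_hasDerivAt_of_nonneg hcont hderiv hnonneg hlim]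
  simp [div_neg]

lemma besselK_one_eq_add {z : ℝ} (hz : 0 < z) :
    besselK 1 z = exp (-z) / z + 1 - besselKOneDefect z := by
  obtain ⟨hsinh_int, hsinh⟩ := integrableOn_and_integral_exp_neg_mul_cosh_mul_sinh hz
  have hsplit : (fun t => exp (-z * cosh t) * cosh t) = fun t =>
      exp (-z * cosh t) * sinh t + exp (-t) - (1 - exp (-z * cosh t)) * exp (-t) := by
    funext t
    rw [← cosh_sub_sinh]
    ring
  have hsum : IntegrableOn (fun t => exp (-z * cosh t) * sinh t + exp (-t)) (Ioi 0) :=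
    hsinh_int.add (integrableOn_exp_neg_Ioi 0)
  rw [besselK_one_eq, hsplit, integral_sub hsum
    (integrableOn_besselKOneDefect_integrand hz.le), integral_add hsinh_int
    (integrableOn_exp_neg_Ioi 0), hsinh, integral_exp_neg_Ioi_zero, besselKOneDefect]

lemma exp_neg_sub_one_add_le {z : ℝ} (hz : 0 ≤ z) : exp (-z) - 1 + z ≤ z ^ 2 / 2 := by
  have h := quadratic_le_exp_of_nonneg hz
  have e : exp (-z) * exp z = 1 := by rw [← exp_add, neg_add_cancel, exp_zero]
  nlinarith [exp_pos (-z), mul_le_mul_of_nonneg_left h (exp_pos (-z)).le]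

lemma abs_besselK_one_sub_inv_le {z T : ℝ} (hz : 0 < z) (hT : 0 ≤ T) (hTz : exp (-T) ≤ z) :
    |besselK 1 z - z⁻¹| ≤ z * (T + 3 / 2) := by
  have hJ := besselKOneDefect_le hz.le hT hTz
  have hJ0 := besselKOneDefect_nonneg hz.le
  have hquad : (exp (-z) - 1 + z) / z ≤ z / 2 := by
    rw [div_le_iff₀ hz]; nlinarith [exp_neg_sub_one_add_le hz.le]
  have hquad0 : 0 ≤ (exp (-z) - 1 + z) / z := by
    have := add_one_le_exp (-z)
    exact div_nonneg (by linarith) hz.le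
  have heq : besselK 1 z - z⁻¹ = (exp (-z) - 1 + z) / z - besselKOneDefect z := by
    rw [besselK_one_eq_add hz]; field_simp; ring
  rw [heq, abs_le]
  constructor <;> nlinarith

lemma abs_log_div_sub_besselK_zero_sub_le {z w T : ℝ} (hz : 0 < z) (hzw : z ≤ w) (hT : 0 ≤ T)
    (hTz : exp (-T) ≤ z) :
    |log (w / z) - (besselK 0 z - besselK 0 w)| ≤ (T + 3 / 2) * (w ^ 2 - z ^ 2) / 2 := by
  have hpos : ∀ s ∈ uIcc z w, 0 < s := by
    rw [uIcc_of_le hzw]; exact fun s hs => hz.trans_le hs.1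
  have hinv : IntervalIntegrable (fun s => s⁻¹) volume z w :=
    (continuousOn_inv₀.mono fun s hs => (hpos s hs).ne').intervalIntegrable
  have hK1 : IntervalIntegrable (besselK 1) volume z w :=
    (besselK_one_antitoneOn.mono hpos).intervalIntegrable
  rw [← integral_inv_of_pos hz (hz.trans_le hzw), besselK_zero_sub_besselK_zero hz hzw,
    ← intervalIntegral.integral_sub hinv hK1, ← Real.norm_eq_abs]
  calc ‖∫ s in z..w, (s⁻¹ - besselK 1 s)‖ ≤ ∫ s in z..w, s * (T + 3 / 2) := by
        refine intervalIntegral.norm_integral_le_of_norm_le hzw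
          (Eventually.of_forall fun s hs => ?_) (by apply Continuous.intervalIntegrable; fun_prop)
        have hzs : z ≤ s := hs.1.le
        rw [norm_sub_rev]
        exact abs_besselK_one_sub_inv_le (hz.trans_le hzs) hT (hTz.trans hzs)
    _ = (T + 3 / 2) * (w ^ 2 - z ^ 2) / 2 := by
        rw [intervalIntegral.integral_mul_const, integral_id]; ring

lemma exp_neg_one_mul_log_inv_le_besselK_zero {z : ℝ} (hz : 0 < z) :
    exp (-1) * log z⁻¹ ≤ besselK 0 z := by
  rcases le_or_gt 1 z with hz1 | hz1
  · have : log z⁻¹ ≤ 0 := by rw [log_inv]; linarith [log_nonneg hz1]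
    nlinarith [besselK_nonneg 0 z, exp_pos (-1)]
  set T := log z⁻¹
  have hT : 0 ≤ T := log_nonneg (one_le_inv₀ hz |>.2 hz1.le)
  -- on `(0, T]` we have `z cosh t ≤ z cosh T = (1 + z²) / 2 ≤ 1`
  have hzcosh : z * cosh T ≤ 1 := by
    rw [cosh_eq, exp_neg, exp_log (inv_pos.2 hz), inv_inv]
    field_simp
    nlinarith
  have hK0 := integrableOn_besselK_zero_integrand hz
  calc exp (-1) * T = ∫ _ in Ioc 0 T, exp (-1) := by
        rw [setIntegral_const, smul_eq_mul, volume_real_Ioc_of_le hT, sub_zero, mul_comm]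
    _ ≤ ∫ t in Ioc 0 T, exp (-z * cosh t) := by
        refine setIntegral_mono_on (integrableOn_const measure_Ioc_lt_top.ne)
          (hK0.mono_set Ioc_subset_Ioi_self) measurableSet_Ioc fun t ht => ?_
        have : cosh t ≤ cosh T := cosh_le_cosh.2 (by
          rw [abs_of_pos ht.1, abs_of_nonneg hT]; exact ht.2)
        gcongr
        nlinarith
    _ ≤ besselK 0 z := by
        rw [besselK_zero_eq]
        exact setIntegral_mono_set hK0 (Eventually.of_forall fun t => (exp_pos _).le)
          Ioc_subset_Ioi_self.eventuallyLE

lemma exp_neg_one_mul_log_inv_le_log_add_besselK_zero {δ z : ℝ} (hδ : 1 ≤ δ) (hz : 0 < z) :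
    exp (-1) * log z⁻¹ ≤ log δ + besselK 0 (δ * z) := by
  have hδz : 0 < δ * z := mul_pos (by linarith) hz
  have hK := exp_neg_one_mul_log_inv_le_besselK_zero hδz
  rw [mul_inv, log_mul (inv_ne_zero (by linarith)) (inv_ne_zero hz.ne'), log_inv δ] at hK
  have : exp (-1) ≤ 1 := exp_le_one_iff.2 (by norm_num)
  nlinarith [log_nonneg hδ]

lemma add_three_halves_le_of_log_two_le {L : ℝ} (hL : log 2 ≤ L) :
    L + 3 / 2 ≤ 11 * (exp (-1) * L) ∧ L + 3 / 2 ≤ 60 * (exp (-1) * L) ^ 2 := by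
  have hL' : 0.69 ≤ L := by linarith [log_two_gt_d9]
  have he : 0.36 ≤ exp (-1) := by
    rw [exp_neg, le_inv_comm₀ (by norm_num) (exp_pos 1)]
    linarith [exp_one_lt_d9]
  constructor <;> nlinarith [mul_le_mul he hL' (by norm_num) (exp_pos _).le]

lemma abs_div_le_div_of_le {a b c u : ℝ} (ha : |a| ≤ c) (hu : 0 < u) (hub : u ≤ b) :
    |a / b| ≤ c / u := by
  rw [abs_div, abs_of_pos (hu.trans_le hub)]
  exact div_le_div₀ ((abs_nonneg a).trans ha) ha hu hub

lemma abs_mul_besselK_div_sub_inv_le {δ z : ℝ} (hδ : 1 ≤ δ) (hz : 0 < z) (hz' : z ≤ 2 / 5) :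
    |z * (besselK 1 z / besselK 0 z) - 1 / (log δ + besselK 0 (δ * z))| ≤
      41 * δ ^ 2 * z ^ 2 := by
  set L := log z⁻¹
  set u := exp (-1) * L
  set D := log δ + besselK 0 (δ * z)
  have hL : log 2 ≤ L := log_le_log two_pos (by rw [le_inv_comm₀ two_pos hz]; linarith)
  have hL0 : 0 ≤ L := (log_pos one_lt_two).le.trans hL
  have hLz : exp (-L) = z := by rw [exp_neg, exp_log (inv_pos.2 hz), inv_inv]
  have hu : 0 < u := mul_pos (exp_pos _) ((log_pos one_lt_two).trans_le hL)
  have hK0 : u ≤ besselK 0 z := exp_neg_one_mul_log_inv_le_besselK_zero hz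
  have hD : u ≤ D := exp_neg_one_mul_log_inv_le_log_add_besselK_zero hδ hz
  obtain ⟨hu11, hu60⟩ := add_three_halves_le_of_log_two_le hL
  have hK1 : |z * besselK 1 z - 1| ≤ (L + 3 / 2) * z ^ 2 := by
    have h := abs_besselK_one_sub_inv_le hz hL0 hLz.le
    rw [show z * besselK 1 z - 1 = z * (besselK 1 z - z⁻¹) by field_simp, abs_mul,
      abs_of_pos hz]
    nlinarith
  have hdiff : |D - besselK 0 z| ≤ (L + 3 / 2) * δ ^ 2 * z ^ 2 / 2 := by
    have hzw : z ≤ δ * z := le_mul_of_one_le_left hz.le hδ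
    have h := abs_log_div_sub_besselK_zero_sub_le hz hzw hL0 hLz.le
    rw [mul_div_cancel_right₀ δ hz.ne'] at h
    rw [show D - besselK 0 z = log δ - (besselK 0 z - besselK 0 (δ * z)) by ring]
    nlinarith [mul_nonneg (by linarith : 0 ≤ L + 3 / 2) (sq_nonneg z)]
  have hK0pos : 0 < besselK 0 z := hu.trans_le hK0
  have hDpos : 0 < D := hu.trans_le hD
  have hsplit : z * (besselK 1 z / besselK 0 z) - 1 / D =
      (z * besselK 1 z - 1) / besselK 0 z + (D - besselK 0 z) / (besselK 0 z * D) := by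
    field_simp; ring
  have hterm1 : |(z * besselK 1 z - 1) / besselK 0 z| ≤ 11 * z ^ 2 := by
    refine (abs_div_le_div_of_le hK1 hu hK0).trans ?_
    rw [div_le_iff₀ hu]; nlinarith [sq_nonneg z]
  have hterm2 : |(D - besselK 0 z) / (besselK 0 z * D)| ≤ 30 * δ ^ 2 * z ^ 2 := by
    refine (abs_div_le_div_of_le hdiff (mul_pos hu hu)
      (mul_le_mul hK0 hD hu.le hK0pos.le)).trans ?_
    rw [div_le_iff₀ (mul_pos hu hu)]; nlinarith [sq_nonneg (δ * z)]
  have hδz : z ^ 2 ≤ δ ^ 2 * z ^ 2 := le_mul_of_one_le_left (sq_nonneg z) (one_le_pow₀ hδ)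
  rw [hsplit]
  linarith [abs_add_le ((z * besselK 1 z - 1) / besselK 0 z)
    ((D - besselK 0 z) / (besselK 0 z * D))]

theorem delta_reg_laplace_eigenvalue_difference_refined (δ : ℝ) (hδ : 1 < δ)
    (ε : ℝ) (hε : 0 < ε) (k : ℕ) (hk : 1 ≤ k) (hks : π * ε * (k : ℝ) ≤ 2 / 5) :
    |2 * π ^ 2 * ε * (k : ℝ) *
          (besselK 1 (π * ε * (k : ℝ)) / besselK 0 (π * ε * (k : ℝ))) -
        2 * π / (Real.log δ + besselK 0 (δ * π * ε * (k : ℝ)))| ≤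
      82 * π ^ 3 * δ ^ 2 * (1 + Real.log δ) * ε ^ 2 * (k : ℝ) ^ 2 := by
  set z := π * ε * (k : ℝ) with hz_def
  have hz : 0 < z := by
    have : (0 : ℝ) < k := by exact_mod_cast hk
    positivity
  have hrescale : 2 * π ^ 2 * ε * (k : ℝ) * (besselK 1 z / besselK 0 z) -
      2 * π / (log δ + besselK 0 (δ * π * ε * (k : ℝ))) =
      2 * π * (z * (besselK 1 z / besselK 0 z) - 1 / (log δ + besselK 0 (δ * z))) := by
    rw [hz_def]; ring_nf
  rw [hrescale, abs_mul, abs_of_pos two_pi_pos]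
  calc 2 * π * |z * (besselK 1 z / besselK 0 z) - 1 / (log δ + besselK 0 (δ * z))|
      ≤ 2 * π * (41 * δ ^ 2 * z ^ 2) := by
        gcongr; exact abs_mul_besselK_div_sub_inv_le hδ.le hz hks
    _ = 82 * π ^ 3 * δ ^ 2 * 1 * ε ^ 2 * (k : ℝ) ^ 2 := by rw [hz_def]; ring
    _ ≤ 82 * π ^ 3 * δ ^ 2 * (1 + log δ) * ε ^ 2 * (k : ℝ) ^ 2 := by
        gcongr; linarith [log_nonneg hδ.le]
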